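/- Let u, v : ℝ^N → ℝ with v = P_a u the polarization of u across the hyperplane {x₁ = a}, and let F(s,t) = (s-t)(s⁺-t⁺). Then for all x, y in the half-space Σ_a⁺ = {x₁ ≥ a}: F(u(x),u(y))/|x-y|^{N+2s} + F(u(x̄),u(y))/|x̄-y|^{N+2s} + F(u(x),u(ȳ))/|x-ȳ|^{N+2s} + F(u(x̄),u(ȳ))/|x̄-ȳ|^{N+2s} ≥ F(v(x),v(y))/|x-y|^{N+2s} + F(v(x̄),v(y))/|x̄-y|^{N+2s} + F(v(x),v(ȳ))/|x-ȳ|^{N+2s} + F(v(x̄),v(ȳ))/|x̄-ȳ|^{N+2s}, provided x ≠ y and x ≠ ȳ (so that all denominators are positive). -/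

import Mathlib

/-- Reflection of `x` across the hyperplane `{x₁ = a}`. -/
noncomputable def reflA {N : ℕ} [NeZero N] (a : ℝ) (x : EuclideanSpace ℝ (Fin N)) :
    EuclideanSpace ℝ (Fin N) :=
  WithLp.toLp 2 (fun i => if i = 0 then 2 * a - x 0 else x i)

/-- Polarization of `u` with respect to the hyperplane `{x₁ = a}`. -/
noncomputable def pol {N : ℕ} [NeZero N] (a : ℝ) (u : EuclideanSpace ℝ (Fin N) → ℝ)
    (x : EuclideanSpace ℝ (Fin N)) : ℝ :=
  if a ≤ x 0 then min (u x) (u (reflA a x)) else max (u x) (u (reflA a x))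

/-- `F s t = (s - t)(s⁺ - t⁺)`. -/
noncomputable def Ffun (s t : ℝ) : ℝ := (s - t) * (max s 0 - max t 0)

/-! On `{x, x̄, y, ȳ}` polarization only sorts the pairs `(u x, u x̄)` and `(u y, u ȳ)`,
putting the smaller values in `Σ_a⁺`. The kernel takes one value `1/k₁` on the pairs `(x, y)`,
`(x̄, ȳ)` and a smaller one `1/k₂` on `(x̄, y)`, `(x, ȳ)`, so when exactly one pair gets swapped
the difference of the two sides is `(1/k₁ - 1/k₂)` times the four-point defect
`F(a,d) + F(b,c) - F(a,c) - F(b,d)` of `F` (`a ≤ b`, `c ≤ d`). For `F(s,t) = (s - t)(s⁺ - t⁺)`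
that defect equals `(b - a)(d⁺ - c⁺) + (d - c)(b⁺ - a⁺) ≥ 0`. -/

def FourPoint (F : ℝ → ℝ → ℝ) : Prop :=
  ∀ a b c d : ℝ, a ≤ b → c ≤ d → F a c + F b d ≤ F a d + F b c

theorem fourPoint_Ffun : FourPoint Ffun := by
  intro a b c d hab hcd
  have hpos₁ : 0 ≤ (b - a) * (max d 0 - max c 0) :=
    mul_nonneg (sub_nonneg.2 hab) (sub_nonneg.2 (max_le_max_right 0 hcd))
  have hpos₂ : 0 ≤ (d - c) * (max b 0 - max a 0) :=
    mul_nonneg (sub_nonneg.2 hcd) (sub_nonneg.2 (max_le_max_right 0 hab))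
  have hdiff : Ffun a d + Ffun b c - (Ffun a c + Ffun b d)
      = (b - a) * (max d 0 - max c 0) + (d - c) * (max b 0 - max a 0) := by
    unfold Ffun; ring
  linarith

theorem FourPoint.sum_min_max_div_le {F : ℝ → ℝ → ℝ} (hF : FourPoint F) {k₁ k₂ : ℝ}
    (hk₁ : 0 < k₁) (hk : k₁ ≤ k₂) (A B C D : ℝ) :
    F (min A B) (min C D) / k₁ + F (max A B) (min C D) / k₂
        + F (min A B) (max C D) / k₂ + F (max A B) (max C D) / k₁
      ≤ F A C / k₁ + F B C / k₂ + F A D / k₂ + F B D / k₁ := by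
  have hw : 0 ≤ k₁⁻¹ - k₂⁻¹ := sub_nonneg.2 (inv_anti₀ hk₁ hk)
  simp only [div_eq_mul_inv]
  rcases le_total A B with hAB | hBA <;> rcases le_total C D with hCD | hDC
  · rw [min_eq_left hAB, max_eq_right hAB, min_eq_left hCD, max_eq_right hCD]
  · rw [min_eq_left hAB, max_eq_right hAB, min_eq_right hDC, max_eq_left hDC]
    linarith [mul_le_mul_of_nonneg_right (hF A B D C hAB hDC) hw]
  · rw [min_eq_right hBA, max_eq_left hBA, min_eq_left hCD, max_eq_right hCD]
    linarith [mul_le_mul_of_nonneg_right (hF B A C D hBA hCD) hw]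
  · rw [min_eq_right hBA, max_eq_left hBA, min_eq_right hDC, max_eq_left hDC]
    linarith

theorem EuclideanSpace.norm_le_norm_of_abs_le {ι : Type*} [Fintype ι]
    {p q : EuclideanSpace ℝ ι} (h : ∀ i, |p i| ≤ |q i|) : ‖p‖ ≤ ‖q‖ := by
  rw [EuclideanSpace.norm_eq, EuclideanSpace.norm_eq]
  gcongr with i
  exact h i

theorem EuclideanSpace.norm_eq_norm_of_abs_eq {ι : Type*} [Fintype ι]
    {p q : EuclideanSpace ℝ ι} (h : ∀ i, |p i| = |q i|) : ‖p‖ = ‖q‖ :=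
  le_antisymm (norm_le_norm_of_abs_le fun i => (h i).le)
    (norm_le_norm_of_abs_le fun i => (h i).ge)

section Reflection

variable {N : ℕ} [NeZero N] {a : ℝ}

@[simp]
theorem reflA_apply_zero (x : EuclideanSpace ℝ (Fin N)) : reflA a x 0 = 2 * a - x 0 := by
  simp [reflA]

@[simp]
theorem reflA_apply_of_ne_zero (x : EuclideanSpace ℝ (Fin N)) {i : Fin N} (hi : i ≠ 0) :
    reflA a x i = x i := by
  simp [reflA, hi]

theorem reflA_reflA (x : EuclideanSpace ℝ (Fin N)) : reflA a (reflA a x) = x := by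
  ext i
  rcases eq_or_ne i 0 with rfl | hi
  · simp
  · simp [hi]

theorem reflA_eq_self_of_apply_zero_eq {x : EuclideanSpace ℝ (Fin N)} (hx : x 0 = a) :
    reflA a x = x := by
  ext i
  rcases eq_or_ne i 0 with rfl | hi
  · simp only [reflA_apply_zero, hx]; ring
  · simp [hi]

theorem norm_reflA_sub_reflA (x y : EuclideanSpace ℝ (Fin N)) :
    ‖reflA a x - reflA a y‖ = ‖x - y‖ := by
  refine EuclideanSpace.norm_eq_norm_of_abs_eq fun i => ?_
  rcases eq_or_ne i 0 with rfl | hi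
  · simp only [PiLp.sub_apply, reflA_apply_zero]
    rw [show 2 * a - x 0 - (2 * a - y 0) = -(x 0 - y 0) by ring, abs_neg]
  · simp [hi]

theorem norm_reflA_sub (x y : EuclideanSpace ℝ (Fin N)) :
    ‖reflA a x - y‖ = ‖x - reflA a y‖ := by
  refine EuclideanSpace.norm_eq_norm_of_abs_eq fun i => ?_
  rcases eq_or_ne i 0 with rfl | hi
  · simp only [PiLp.sub_apply, reflA_apply_zero]
    rw [show 2 * a - x 0 - y 0 = -(x 0 - (2 * a - y 0)) by ring, abs_neg]
  · simp [hi]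

theorem norm_sub_le_norm_sub_reflA {x y : EuclideanSpace ℝ (Fin N)} (hx : a ≤ x 0)
    (hy : a ≤ y 0) : ‖x - y‖ ≤ ‖x - reflA a y‖ := by
  refine EuclideanSpace.norm_le_norm_of_abs_le fun i => ?_
  rcases eq_or_ne i 0 with rfl | hi
  · simp only [PiLp.sub_apply, reflA_apply_zero]
    rw [abs_of_nonneg (by linarith : 0 ≤ x 0 - (2 * a - y 0))]
    exact abs_le.2 ⟨by linarith, by linarith⟩
  · simp [hi]

theorem pol_of_le (u : EuclideanSpace ℝ (Fin N) → ℝ) {x : EuclideanSpace ℝ (Fin N)}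
    (hx : a ≤ x 0) : pol a u x = min (u x) (u (reflA a x)) :=
  if_pos hx

theorem pol_reflA_of_le (u : EuclideanSpace ℝ (Fin N) → ℝ) {x : EuclideanSpace ℝ (Fin N)}
    (hx : a ≤ x 0) : pol a u (reflA a x) = max (u x) (u (reflA a x)) := by
  rcases hx.eq_or_lt with hxa | hxa
  · have hfix : reflA a x = x := reflA_eq_self_of_apply_zero_eq hxa.symm
    rw [hfix, pol_of_le u hx, hfix, min_self, max_self]
  · rw [pol, if_neg (by rw [reflA_apply_zero]; linarith), reflA_reflA, max_comm]

end Reflection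

theorem four_point_kernel_inequality_general {N : ℕ} [NeZero N] (s a : ℝ)
    (hs : s ∈ Set.Ioo (0 : ℝ) 1) (u v : EuclideanSpace ℝ (Fin N) → ℝ)
    (hv : v = pol a u) (x y : EuclideanSpace ℝ (Fin N))
    (hx : a ≤ x 0) (hy : a ≤ y 0) (hxy : x ≠ y) :
    Ffun (u x) (u y) / ‖x - y‖ ^ ((N : ℝ) + 2 * s)
      + Ffun (u (reflA a x)) (u y) / ‖reflA a x - y‖ ^ ((N : ℝ) + 2 * s)
      + Ffun (u x) (u (reflA a y)) / ‖x - reflA a y‖ ^ ((N : ℝ) + 2 * s)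
      + Ffun (u (reflA a x)) (u (reflA a y)) / ‖reflA a x - reflA a y‖ ^ ((N : ℝ) + 2 * s)
    ≥ Ffun (v x) (v y) / ‖x - y‖ ^ ((N : ℝ) + 2 * s)
      + Ffun (v (reflA a x)) (v y) / ‖reflA a x - y‖ ^ ((N : ℝ) + 2 * s)
      + Ffun (v x) (v (reflA a y)) / ‖x - reflA a y‖ ^ ((N : ℝ) + 2 * s)
      + Ffun (v (reflA a x)) (v (reflA a y)) / ‖reflA a x - reflA a y‖ ^ ((N : ℝ) + 2 * s) := by
  subst hv
  have hexp : 0 ≤ (N : ℝ) + 2 * s := by linarith [hs.1, (N.cast_nonneg : (0 : ℝ) ≤ N)]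
  have hk₁ : 0 < ‖x - y‖ ^ ((N : ℝ) + 2 * s) :=
    Real.rpow_pos_of_pos (norm_pos_iff.2 (sub_ne_zero.2 hxy)) _
  have hk : ‖x - y‖ ^ ((N : ℝ) + 2 * s) ≤ ‖x - reflA a y‖ ^ ((N : ℝ) + 2 * s) :=
    Real.rpow_le_rpow (norm_nonneg _) (norm_sub_le_norm_sub_reflA hx hy) hexp
  rw [norm_reflA_sub_reflA, norm_reflA_sub, pol_of_le u hx, pol_of_le u hy,
    pol_reflA_of_le u hx, pol_reflA_of_le u hy]
  exact fourPoint_Ffun.sum_min_max_div_le hk₁ hk _ _ _ _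

theorem four_point_kernel_inequality {N : ℕ} [NeZero N] (s a : ℝ)
    (hs : s ∈ Set.Ioo (0 : ℝ) 1) (u v : EuclideanSpace ℝ (Fin N) → ℝ)
    (hv : v = pol a u) (x y : EuclideanSpace ℝ (Fin N))
    (hx : a ≤ x 0) (hy : a ≤ y 0) (hxy : x ≠ y) (hxy' : x ≠ reflA a y) :
    Ffun (u x) (u y) / ‖x - y‖ ^ ((N : ℝ) + 2 * s)
      + Ffun (u (reflA a x)) (u y) / ‖reflA a x - y‖ ^ ((N : ℝ) + 2 * s)
      + Ffun (u x) (u (reflA a y)) / ‖x - reflA a y‖ ^ ((N : ℝ) + 2 * s)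
      + Ffun (u (reflA a x)) (u (reflA a y)) / ‖reflA a x - reflA a y‖ ^ ((N : ℝ) + 2 * s)
    ≥ Ffun (v x) (v y) / ‖x - y‖ ^ ((N : ℝ) + 2 * s)
      + Ffun (v (reflA a x)) (v y) / ‖reflA a x - y‖ ^ ((N : ℝ) + 2 * s)
      + Ffun (v x) (v (reflA a y)) / ‖x - reflA a y‖ ^ ((N : ℝ) + 2 * s)
      + Ffun (v (reflA a x)) (v (reflA a y)) / ‖reflA a x - reflA a y‖ ^ ((N : ℝ) + 2 * s) :=
  four_point_kernel_inequality_general s a hs u v hv x y hx hy hxy
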